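/- arXiv:2508.20980 — 2 statements merged into one kernel-verified Lean document; each statement's English description precedes it below -/
import Mathlib

section
/- As the in-block memory length grows, the outer-bound expression converges to one bit per channel use: U(L) → 1 as L → ∞. -/
open Finset Filter Topology

/-- Binary entropy function with base-2 logarithm. `Real.logb 2 0 = 0`, so
`H2 0 = H2 1 = 0` automatically. -/
noncomputable def H2 (p : ℝ) : ℝ :=
  -(p * Real.logb 2 p) - (1 - p) * Real.logb 2 (1 - p)

/-- Partial sums `s_j = ∑_{k=1}^j c_k` of the beam-budget sequence. -/
noncomputable def s (K B : ℝ) : ℕ → ℝ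
  | 0 => 0
  | (j+1) => s K B j + min ((K - s K B j) / 2) B

/-- The beam-budget sequence: `c_0 = 0` and `c_j = min((K - s_{j-1})/2, B)` for `j ≥ 1`. -/
noncomputable def c (K B : ℝ) : ℕ → ℝ
  | 0 => 0
  | (j+1) => min ((K - s K B j) / 2) B

/-- The `j`-th term of the outer bound (Theorem 1), for `j ≥ 1`. -/
noncomputable def t (K B : ℝ) (j : ℕ) : ℝ :=
  (1 - s K B (j-1) / K) * H2 (c K B j / (K - s K B (j-1))) + s K B (j-1) / K

/-- The outer-bound (Theorem 1) expression `U(L)`. -/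
noncomputable def U (K B : ℝ) (L : ℕ) : ℝ :=
  (1 / (L : ℝ)) * ∑ j ∈ Finset.Icc 1 L, t K B j

/-- The `j`-th eavesdropper-leakage term, for `j ≥ 1` (natural subtraction makes the
middle term vanish at `j = 1` and the final sum empty for `j ≤ 3`). -/
noncomputable def g (K B : ℝ) (j : ℕ) : ℝ :=
  ((K - s K B (j-1)) / K) * H2 (c K B j / K)
  + (c K B (j-1) * (K - s K B (j-2)) / K^2) *
      H2 ((1/2) * c K B (j-1) / (K - s K B (j-2)))
  + ∑ k ∈ Finset.Icc 1 (j-3),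
      (1/K) * ((c K B (k+1))^2 / K^2) * (1/2 : ℝ)^(2*(j-k-2)-1)

/-- The gap `G(L)` between the outer and inner bounds. -/
noncomputable def G (K B : ℝ) (L : ℕ) : ℝ :=
  (1 / (L : ℝ)) * ∑ j ∈ Finset.Icc 1 L, g K B j

/-- The inner-bound (Theorem 2) expression `I(L) = U(L) - G(L)`. -/
noncomputable def Ib (K B : ℝ) (L : ℕ) : ℝ := U K B L - G K B L

section aux

variable {K B : ℝ}

lemma s_nonneg (hK : 0 < K) (hB : 0 < B) : ∀ j, 0 ≤ s K B j ∧ s K B j < K := by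
  intro j
  induction j with
  | zero => simpa [s] using hK
  | succ n ih =>
    obtain ⟨h0, h1⟩ := ih
    have hmin0 : 0 ≤ min ((K - s K B n) / 2) B :=
      le_min (by linarith) hB.le
    constructor
    · simp only [s]; linarith
    · simp only [s]
      have : min ((K - s K B n) / 2) B ≤ (K - s K B n) / 2 := min_le_left _ _
      linarith

lemma s_mono (hK : 0 < K) (hB : 0 < B) : Monotone (s K B) := by
  apply monotone_nat_of_le_succ
  intro n
  have h1 := (s_nonneg hK hB n).2
  have : (0:ℝ) ≤ min ((K - s K B n) / 2) B := le_min (by linarith) hB.le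
  simp only [s]; linarith

lemma s_tendsto (hK : 0 < K) (hB : 0 < B) : Filter.Tendsto (s K B) Filter.atTop (nhds K) := by
  have hbdd : BddAbove (Set.range (s K B)) :=
    ⟨K, by rintro x ⟨j, rfl⟩; exact (s_nonneg hK hB j).2.le⟩
  set L := ⨆ j, s K B j with hL
  have htend : Filter.Tendsto (s K B) Filter.atTop (nhds L) :=
    tendsto_atTop_ciSup (s_mono hK hB) hbdd
  have htend' : Filter.Tendsto (fun n => s K B (n+1)) Filter.atTop (nhds L) :=
    htend.comp (Filter.tendsto_add_atTop_nat 1)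
  have hcont : Filter.Tendsto (fun n => s K B n + min ((K - s K B n) / 2) B)
      Filter.atTop (nhds (L + min ((K - L) / 2) B)) := by
    apply Filter.Tendsto.add htend
    exact Filter.Tendsto.min (by exact ((tendsto_const_nhds.sub htend).div_const 2)) tendsto_const_nhds
  have heq : L = L + min ((K - L) / 2) B := by
    have : Filter.Tendsto (fun n => s K B (n+1)) Filter.atTop (nhds (L + min ((K - L) / 2) B)) := by
      simpa [s] using hcont
    exact tendsto_nhds_unique htend' this
  have hmin : min ((K - L) / 2) B = 0 := by linarith
  have hLleK : L ≤ K := ciSup_le fun j => (s_nonneg hK hB j).2.le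
  have : (K - L) / 2 = 0 := by
    rcases min_eq_iff.mp hmin with ⟨h, _⟩ | ⟨h, _⟩
    · exact h
    · linarith
  have : L = K := by linarith
  rwa [this] at htend

lemma H2_nonneg {p : ℝ} (h0 : 0 ≤ p) (h1 : p ≤ 1) : 0 ≤ H2 p := by
  have : H2 p = Real.binEntropy p / Real.log 2 := by
    simp only [H2, Real.binEntropy, Real.logb, Real.log_inv]
    ring
  rw [this]
  exact div_nonneg (Real.binEntropy_nonneg h0 h1) (Real.log_nonneg (by norm_num))

lemma H2_le_one (p : ℝ) : H2 p ≤ 1 := by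
  have h : H2 p = Real.binEntropy p / Real.log 2 := by
    simp only [H2, Real.binEntropy, Real.logb, Real.log_inv]
    ring
  rw [h, div_le_one (Real.log_pos (by norm_num))]
  exact Real.binEntropy_le_log_two

end aux

theorem stmt_11 (K : ℕ) (hK : 2 ≤ K) (B : ℝ) (hB : 0 < B) :
    Tendsto (fun L : ℕ => U K B L) atTop (𝓝 1) := by
  have hK0 : (0:ℝ) < K := by positivity
  -- the summand tends to 1
  have hterm : Filter.Tendsto (fun n : ℕ => t K B (n+1)) Filter.atTop (𝓝 1) := by
    have hlow : Filter.Tendsto (fun n : ℕ => s (K:ℝ) B n / K) Filter.atTop (𝓝 1) := by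
      have := (s_tendsto hK0 hB).div_const (K:ℝ)
      simpa [div_self hK0.ne'] using this
    apply tendsto_of_tendsto_of_tendsto_of_le_of_le hlow tendsto_const_nhds
    · intro n
      show s (K:ℝ) B n / K ≤ t (K:ℝ) B (n+1)
      have hs := s_nonneg hK0 hB n
      have hpos : 0 < (K:ℝ) - s K B n := by linarith [hs.2]
      have hc0 : 0 ≤ c (K:ℝ) B (n+1) := le_min (by linarith) hB.le
      have hc1 : c (K:ℝ) B (n+1) ≤ (K:ℝ) - s K B n := by
        have : c (K:ℝ) B (n+1) ≤ ((K:ℝ) - s K B n) / 2 := min_le_left _ _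
        linarith
      have hH : 0 ≤ H2 (c (K:ℝ) B (n+1) / ((K:ℝ) - s K B n)) :=
        H2_nonneg (div_nonneg hc0 hpos.le) ((div_le_one hpos).mpr hc1)
      have hfac : 0 ≤ 1 - s (K:ℝ) B n / K := by
        rw [sub_nonneg, div_le_one hK0]; exact hs.2.le
      have : t (K:ℝ) B (n+1) = (1 - s K B n / K) * H2 (c K B (n+1) / (K - s K B n))
          + s K B n / K := by simp [t]
      rw [this]
      nlinarith
    · intro n
      show t (K:ℝ) B (n+1) ≤ 1
      have hs := s_nonneg hK0 hB n
      have hfac : 0 ≤ 1 - s (K:ℝ) B n / K := by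
        rw [sub_nonneg, div_le_one hK0]; exact hs.2.le
      have hH : H2 (c (K:ℝ) B (n+1) / ((K:ℝ) - s K B n)) ≤ 1 := H2_le_one _
      have heq : t (K:ℝ) B (n+1) = (1 - s K B n / K) * H2 (c K B (n+1) / (K - s K B n))
          + s K B n / K := by simp [t]
      rw [heq]
      nlinarith
  have := hterm.cesaro
  refine this.congr fun L => ?_
  rw [U, one_div]
  congr 1
  have : Finset.Icc 1 L = Finset.Ico 1 (L+1) := by rw [Finset.Ico_add_one_right_eq_Icc]
  rw [this, Finset.sum_Ico_eq_sum_range]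
  simp [add_comm]
end

section
/- The achievable secrecy-rate (inner-bound) expression converges to one bit per channel use as the in-block memory length grows: I(L) → 1 as L → ∞. -/
/-!
The remaining budget `K - s_j` decreases to `0`, so eventually `c_{j+1} = (K - s_j) / 2`; from
then on `t_{j+1} = 1` (since `H₂(1/2) = 1`) and the Cesàro means `U(L)` tend to `1`. In `g_j`
the first two terms tend to `0`, while the convolution term has partial sums bounded by
`∑ c_k² / K³ ≤ B / K²`, so its Cesàro mean is `O(1/L)`. Hence `G(L) → 0`.
-/

open Finset Filter Topology

open Real

lemma H2_eq_negMulLog (p : ℝ) : H2 p = (negMulLog p + negMulLog (1 - p)) / log 2 := by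
  simp only [H2, negMulLog, logb]
  ring

lemma continuous_H2 : Continuous H2 := by
  simp only [funext H2_eq_negMulLog]
  fun_prop

lemma H2_zero : H2 0 = 0 := by simp [H2]

lemma H2_half : H2 (1 / 2) = 1 := by
  have h : logb 2 (1 / 2 : ℝ) = -1 := by
    rw [one_div, logb_inv, logb_self_eq_one one_lt_two]
  norm_num [H2, h]

noncomputable def cesaroMean (u : ℕ → ℝ) (L : ℕ) : ℝ :=
  (1 / (L : ℝ)) * ∑ j ∈ Icc 1 L, u j

lemma cesaroMean_add (u v : ℕ → ℝ) (L : ℕ) :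
    cesaroMean (u + v) L = cesaroMean u L + cesaroMean v L := by
  simp only [cesaroMean, Pi.add_apply, sum_add_distrib, mul_add]

lemma tendsto_cesaroMean {u : ℕ → ℝ} {a : ℝ} (h : Tendsto u atTop (𝓝 a)) :
    Tendsto (cesaroMean u) atTop (𝓝 a) := by
  refine ((tendsto_add_atTop_iff_nat 1).2 h).cesaro.congr fun L => ?_
  rw [cesaroMean, one_div, ← Ico_add_one_right_eq_Icc, sum_Ico_eq_sum_range]
  simp only [add_comm 1, add_tsub_cancel_right]

lemma tendsto_cesaroMean_zero_of_sum_le {v : ℕ → ℝ} {C : ℝ} (hv : ∀ j, 0 ≤ v j)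
    (hC : ∀ L, ∑ j ∈ Icc 1 L, v j ≤ C) : Tendsto (cesaroMean v) atTop (𝓝 0) := by
  have hC' : Tendsto (fun L : ℕ => 1 / (L : ℝ) * C) atTop (𝓝 0) := by
    simpa using tendsto_one_div_atTop_nhds_zero_nat.mul_const C
  refine squeeze_zero (fun L => ?_) (fun L => ?_) hC'
  · exact mul_nonneg (by positivity) (sum_nonneg fun j _ => hv j)
  · exact mul_le_mul_of_nonneg_left (hC L) (by positivity)

lemma sum_Icc_half_pow_le_one (k L : ℕ) :
    ∑ j ∈ Icc (k + 3) L, (1 / 2 : ℝ) ^ (2 * (j - k - 2) - 1) ≤ 1 := by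
  rw [← Ico_add_one_right_eq_Icc, sum_Ico_eq_sum_range]
  calc ∑ i ∈ range (L + 1 - (k + 3)), (1 / 2 : ℝ) ^ (2 * (k + 3 + i - k - 2) - 1)
      ≤ ∑ i ∈ range (L + 1 - (k + 3)), (1 / 2 : ℝ) ^ i * (1 / 2) := by
        refine sum_le_sum fun i _ => ?_
        rw [← pow_succ]
        exact pow_le_pow_of_le_one (by norm_num) (by norm_num) (by omega)
    _ ≤ 2 * (1 / 2) := by
        rw [← sum_mul]
        exact mul_le_mul_of_nonneg_right (sum_geometric_two_le _) (by norm_num)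
    _ = 1 := by norm_num

/-- Each weight `a k` enters the double sum with total coefficient at most `1`. -/
lemma sum_Icc_sum_Icc_mul_half_pow_le {a : ℕ → ℝ} (ha : ∀ k, 0 ≤ a k) (L : ℕ) :
    ∑ j ∈ Icc 1 L, ∑ k ∈ Icc 1 (j - 3), a k * (1 / 2 : ℝ) ^ (2 * (j - k - 2) - 1)
      ≤ ∑ k ∈ Icc 1 L, a k := by
  rw [sum_comm' (t' := Icc 1 L) (s' := fun k => Icc (k + 3) L) (fun j k => by
    simp only [mem_Icc]; omega)]
  refine sum_le_sum fun k _ => ?_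
  rw [← mul_sum]
  exact mul_le_of_le_one_right (ha k) (sum_Icc_half_pow_le_one k L)

section BeamBudget

variable {K B : ℝ}

lemma s_succ (j : ℕ) : s K B (j + 1) = s K B j + c K B (j + 1) := rfl

lemma s_lt (hK : 0 < K) : ∀ j, s K B j < K
  | 0 => hK
  | j + 1 => by
      have := s_lt hK j
      have := min_le_left ((K - s K B j) / 2) B
      rw [s]
      linarith

lemma c_succ_le (j : ℕ) : c K B (j + 1) ≤ B := min_le_right _ _

lemma c_nonneg (hK : 0 < K) (hB : 0 ≤ B) : ∀ j, 0 ≤ c K B j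
  | 0 => le_rfl
  | j + 1 => le_min (by linarith [s_lt (B := B) hK j]) hB

lemma s_eq_sum_range (K B : ℝ) : ∀ n, s K B n = ∑ k ∈ range n, c K B (k + 1)
  | 0 => rfl
  | n + 1 => by rw [sum_range_succ, ← s_eq_sum_range K B n, s_succ]

lemma sum_Icc_c_succ_le (hK : 0 < K) (hB : 0 ≤ B) (L : ℕ) :
    ∑ k ∈ Icc 1 L, c K B (k + 1) ≤ K :=
  calc ∑ k ∈ Icc 1 L, c K B (k + 1) ≤ ∑ k ∈ range (L + 1), c K B (k + 1) :=
        sum_le_sum_of_subset_of_nonneg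
          (fun k hk => by simp only [mem_Icc, mem_range] at hk ⊢; omega)
          fun k _ _ => c_nonneg hK hB _
    _ = s K B (L + 1) := (s_eq_sum_range K B _).symm
    _ ≤ K := (s_lt hK _).le

/-- The limit `l` of the antitone sequence `K - s_j` is a fixed point of `x ↦ x - min (x / 2) B`,
which forces `l = 0`. -/
lemma tendsto_sub_s (hK : 0 < K) (hB : 0 < B) :
    Tendsto (fun j => K - s K B j) atTop (𝓝 0) := by
  set d := fun j => K - s K B j with hd
  have hd_succ : ∀ j, d (j + 1) = d j - min (d j / 2) B := fun j => by
    simp only [hd, s]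
    ring
  have hd_nonneg : ∀ j, 0 ≤ d j := fun j => (sub_pos.2 (s_lt hK j)).le
  have hanti : Antitone d := antitone_nat_of_succ_le fun j => by
    rw [hd_succ]
    linarith [le_min (div_nonneg (hd_nonneg j) zero_le_two) hB.le]
  obtain ⟨l, hl⟩ : ∃ l, Tendsto d atTop (𝓝 l) :=
    ⟨_, tendsto_atTop_ciInf hanti ⟨0, by rintro _ ⟨j, rfl⟩; exact hd_nonneg j⟩⟩
  have hfix : l = l - min (l / 2) B := by
    refine tendsto_nhds_unique ((tendsto_add_atTop_iff_nat 1).2 hl) ?_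
    simpa only [hd_succ] using hl.sub ((hl.div_const 2).min tendsto_const_nhds)
  have hl_nonpos : ¬ 0 < l := fun hl_pos => by
    linarith [lt_min (half_pos hl_pos) hB]
  rwa [le_antisymm (not_lt.1 hl_nonpos) (ge_of_tendsto' hl hd_nonneg)] at hl

lemma tendsto_c (hK : 0 < K) (hB : 0 < B) : Tendsto (c K B) atTop (𝓝 0) := by
  have h := tendsto_sub_s hK hB
  refine (tendsto_add_atTop_iff_nat 1).1 ?_
  simpa [s_succ] using h.sub ((tendsto_add_atTop_iff_nat 1).2 h)

lemma eventually_sub_s_le (hK : 0 < K) (hB : 0 < B) :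
    ∀ᶠ j in atTop, K - s K B j ≤ 2 * B :=
  (tendsto_sub_s hK hB).eventually (ge_mem_nhds (by linarith))

lemma c_succ_div_eq_half (hK : 0 < K) {j : ℕ} (h2B : K - s K B j ≤ 2 * B) :
    c K B (j + 1) / (K - s K B j) = 1 / 2 := by
  have hd : K - s K B j ≠ 0 := (sub_pos.2 (s_lt hK j)).ne'
  rw [c, min_eq_left (by linarith)]
  field_simp

lemma t_succ_eq_one (hK : 0 < K) {j : ℕ} (h2B : K - s K B j ≤ 2 * B) :
    t K B (j + 1) = 1 := by
  rw [t, add_tsub_cancel_right, c_succ_div_eq_half hK h2B, H2_half]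
  ring

lemma tendsto_t (hK : 0 < K) (hB : 0 < B) : Tendsto (t K B) atTop (𝓝 1) :=
  (tendsto_add_atTop_iff_nat 1).1 <| tendsto_const_nhds.congr' <|
    (eventually_sub_s_le hK hB).mono fun _ h2B => (t_succ_eq_one hK h2B).symm

noncomputable def leakageHead (K B : ℝ) (j : ℕ) : ℝ :=
  (K - s K B (j - 1)) / K * H2 (c K B j / K)
    + c K B (j - 1) * (K - s K B (j - 2)) / K ^ 2 *
      H2 (1 / 2 * c K B (j - 1) / (K - s K B (j - 2)))

noncomputable def leakageTail (K B : ℝ) (j : ℕ) : ℝ :=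
  ∑ k ∈ Icc 1 (j - 3),
    1 / K * (c K B (k + 1) ^ 2 / K ^ 2) * (1 / 2 : ℝ) ^ (2 * (j - k - 2) - 1)

lemma g_eq_leakageHead_add_leakageTail : g K B = leakageHead K B + leakageTail K B := rfl

/-- Once `K - s_j ≤ 2B`, the entropy in the second term is frozen at `H2 (1/4)`. -/
lemma tendsto_leakageHead (hK : 0 < K) (hB : 0 < B) :
    Tendsto (leakageHead K B) atTop (𝓝 0) := by
  have hd := tendsto_sub_s hK hB
  have hc := tendsto_c hK hB
  refine (tendsto_add_atTop_iff_nat 2).1 ?_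
  simp only [leakageHead, Nat.add_sub_cancel, show ∀ j, j + 2 - 1 = j + 1 from fun _ => rfl]
  have hfirst : Tendsto (fun j => (K - s K B (j + 1)) / K * H2 (c K B (j + 2) / K))
      atTop (𝓝 0) := by
    have harg : Tendsto (fun j => c K B (j + 2) / K) atTop (𝓝 0) := by
      simpa using ((tendsto_add_atTop_iff_nat 2).2 hc).div_const K
    have hH := H2_zero ▸ (continuous_H2.tendsto 0).comp harg
    simpa using (((tendsto_add_atTop_iff_nat 1).2 hd).div_const K).mul hH
  have hsecond : Tendsto (fun j => c K B (j + 1) * (K - s K B j) / K ^ 2 *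
      H2 (1 / 2 * c K B (j + 1) / (K - s K B j))) atTop (𝓝 0) := by
    refine Tendsto.congr' ?_ (by simpa using
      ((((tendsto_add_atTop_iff_nat 1).2 hc).mul hd).div_const (K ^ 2)).mul_const (H2 (1 / 4)))
    filter_upwards [eventually_sub_s_le hK hB] with j h2B
    rw [mul_div_assoc (1 / 2), c_succ_div_eq_half hK h2B]
    norm_num
  simpa using hfirst.add hsecond

lemma leakageTail_nonneg (hK : 0 < K) (hB : 0 ≤ B) (j : ℕ) : 0 ≤ leakageTail K B j :=
  sum_nonneg fun k _ => by have := c_nonneg hK hB (k + 1); positivity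

lemma sum_Icc_leakageTail_le (hK : 0 < K) (hB : 0 ≤ B) (L : ℕ) :
    ∑ j ∈ Icc 1 L, leakageTail K B j ≤ B / K ^ 2 := by
  have hterm : ∀ k, 1 / K * (c K B (k + 1) ^ 2 / K ^ 2) ≤ B / K ^ 3 * c K B (k + 1) := by
    intro k
    have hc := c_nonneg hK hB (k + 1)
    have hsq : c K B (k + 1) ^ 2 ≤ B * c K B (k + 1) := by
      nlinarith [c_succ_le (K := K) (B := B) k]
    calc 1 / K * (c K B (k + 1) ^ 2 / K ^ 2) = c K B (k + 1) ^ 2 / K ^ 3 := by ring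
      _ ≤ B * c K B (k + 1) / K ^ 3 := by gcongr
      _ = B / K ^ 3 * c K B (k + 1) := by ring
  calc ∑ j ∈ Icc 1 L, leakageTail K B j
      ≤ ∑ k ∈ Icc 1 L, 1 / K * (c K B (k + 1) ^ 2 / K ^ 2) :=
        sum_Icc_sum_Icc_mul_half_pow_le (fun k => by have := c_nonneg hK hB (k + 1); positivity) L
    _ ≤ ∑ k ∈ Icc 1 L, B / K ^ 3 * c K B (k + 1) := sum_le_sum fun k _ => hterm k
    _ ≤ B / K ^ 3 * K := by
        rw [← mul_sum]
        exact mul_le_mul_of_nonneg_left (sum_Icc_c_succ_le hK hB L) (by positivity)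
    _ = B / K ^ 2 := by field_simp

end BeamBudget

theorem stmt_16 (K : ℕ) (hK : 2 ≤ K) (B : ℝ) (hB : 0 < B) :
    Tendsto (fun L : ℕ => Ib K B L) atTop (𝓝 1) := by
  have hK0 : (0 : ℝ) < K := by exact_mod_cast (by omega : 0 < K)
  have hU : Tendsto (U K B) atTop (𝓝 1) := tendsto_cesaroMean (tendsto_t hK0 hB)
  have hG : Tendsto (G K B) atTop (𝓝 0) := by
    have h := (tendsto_cesaroMean (tendsto_leakageHead hK0 hB)).add
      (tendsto_cesaroMean_zero_of_sum_le (leakageTail_nonneg hK0 hB.le)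
        (sum_Icc_leakageTail_le hK0 hB.le))
    rw [add_zero] at h
    exact h.congr fun L => by
      rw [← cesaroMean_add, ← g_eq_leakageHead_add_leakageTail]
      rfl
  simpa only [Ib, sub_zero] using hU.sub hG
end
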